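/- arXiv:0903.1082 — 2 statements merged into one kernel-verified Lean document; each statement's English description precedes it below -/
import Mathlib

section
/- Let Λ = {λ_k}_{k∈ℤ} ⊂ ℝ with λ_{k+1} - λ_k ≥ T for all k, and suppose Λ is a set of sampling for PW([-Ω/2,Ω/2]), i.e. ‖f‖²_{L²} ≍ Σ_n |f(λ_n)|² for all f ∈ PW([-Ω/2,Ω/2]). Then for every h ∈ L²(ℝ²) with supp h(·,x) ⊆ [0,T] and h(t,·) ∈ PW([-Ω/2,Ω/2]) for a.e. t, one has ‖h‖²_{L²(ℝ²)} ≍ ‖g‖²_{L²(ℝ)}, where g(x) = Σ_k h(x - λ_k, x). -/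
open MeasureTheory Complex Real

noncomputable section

/-- `f` belongs to the Paley–Wiener space `PW([-Ω/2, Ω/2])`. -/
def IsPW (Ω : ℝ) (f : ℝ → ℂ) : Prop :=
  ∃ F : ℝ → ℂ, MemLp F 2 (volume : Measure ℝ) ∧
    (∀ ν : ℝ, ν ∉ Set.Icc (-(Ω / 2)) (Ω / 2) → F ν = 0) ∧
    ∀ x : ℝ, f x = ∫ ν : ℝ, F ν *
      Complex.exp (2 * (Real.pi : ℂ) * Complex.I * (x : ℂ) * (ν : ℂ))

/-! For a.e. `x` at most one term of `∑' k, h (x - lam k) x` is nonzero, because the points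
`lam k` are `T`-separated and `h t x` vanishes for `t ∉ [0, T]`. Hence
`∫ ‖g‖² = ∑ₖ ∫ ‖h (x - lam k) x‖² dx = ∫ ∑ₖ ‖h t (t + lam k)‖² dt`. For a.e. `t` the function
`h t (t + ·)` lies in `PW`, so the sampling inequality bounds the inner sum between
`A * ‖h t‖²` and `B * ‖h t‖²`; integrating in `t` (Tonelli) gives the claim with `c = A` and
`C = B`. -/

open Filter Set Topology
open scoped ENNReal

section Lp

variable {α E : Type*} [MeasurableSpace α] {μ : Measure α} [NormedAddCommGroup E] {f : α → E}

theorem memLp_two_iff_lintegral_enorm_sq_lt_top (hf : AEStronglyMeasurable f μ) :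
    MemLp f 2 μ ↔ ∫⁻ x, ‖f x‖ₑ ^ 2 ∂μ < ∞ := by
  rw [memLp_two_iff_integrable_sq_norm hf, Integrable, and_iff_right (by fun_prop),
    hasFiniteIntegral_iff_enorm]
  simp [enorm_pow]

theorem integral_norm_sq_eq_toReal_lintegral (hf : AEStronglyMeasurable f μ) :
    ∫ x, ‖f x‖ ^ 2 ∂μ = (∫⁻ x, ‖f x‖ₑ ^ 2 ∂μ).toReal := by
  rw [integral_eq_lintegral_of_nonneg_ae (ae_of_all _ fun x => by positivity) (by fun_prop)]
  simp_rw [ENNReal.ofReal_pow (norm_nonneg _), ofReal_norm]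

theorem toReal_lintegral_bounds_of_ae_bounds {F G : α → ℝ≥0∞} {A B : ℝ} (hA : 0 ≤ A)
    (hB : 0 ≤ B) (hF : ∫⁻ x, F x ∂μ ≠ ∞)
    (hbounds : ∀ᵐ x ∂μ, ENNReal.ofReal A * F x ≤ G x ∧ G x ≤ ENNReal.ofReal B * F x) :
    A * (∫⁻ x, F x ∂μ).toReal ≤ (∫⁻ x, G x ∂μ).toReal ∧
      (∫⁻ x, G x ∂μ).toReal ≤ B * (∫⁻ x, F x ∂μ).toReal := by
  have hlower : ENNReal.ofReal A * ∫⁻ x, F x ∂μ ≤ ∫⁻ x, G x ∂μ := by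
    rw [← lintegral_const_mul' _ _ ENNReal.ofReal_ne_top]
    exact lintegral_mono_ae (hbounds.mono fun x hx => hx.1)
  have hupper : ∫⁻ x, G x ∂μ ≤ ENNReal.ofReal B * ∫⁻ x, F x ∂μ := by
    rw [← lintegral_const_mul' _ _ ENNReal.ofReal_ne_top]
    exact lintegral_mono_ae (hbounds.mono fun x hx => hx.2)
  have hfin : ENNReal.ofReal B * ∫⁻ x, F x ∂μ ≠ ∞ := ENNReal.mul_ne_top ENNReal.ofReal_ne_top hF
  constructor
  · simpa [ENNReal.toReal_mul, hA] using
      ENNReal.toReal_mono (ne_top_of_le_ne_top hfin hupper) hlower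
  · simpa [ENNReal.toReal_mul, hB] using ENNReal.toReal_mono hfin hupper

end Lp

theorem MemLp.prod_right_ae {α β E : Type*} [MeasurableSpace α] [MeasurableSpace β]
    [NormedAddCommGroup E] {μ : Measure α} {ν : Measure β} [SFinite μ] [SFinite ν]
    {p : ℝ≥0∞} (hp0 : p ≠ 0) (hp : p ≠ ∞) {f : α × β → E} (hf : MemLp f p (μ.prod ν)) :
    ∀ᵐ x ∂μ, MemLp (fun y => f (x, y)) p ν := by
  have hmeas := hf.1
  rw [← memLp_norm_rpow_iff hmeas hp0 hp, ENNReal.div_self hp0 hp, memLp_one_iff_integrable] at hf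
  filter_upwards [hmeas.prodMk_left, hf.prod_right_ae] with x hx hix
  rwa [← memLp_norm_rpow_iff hx hp0 hp, ENNReal.div_self hp0 hp, memLp_one_iff_integrable]

theorem norm_cexp_two_pi_I_mul_mul (x ν : ℝ) :
    ‖Complex.exp (2 * (Real.pi : ℂ) * Complex.I * (x : ℂ) * (ν : ℂ))‖ = 1 := by
  rw [show 2 * (π : ℂ) * I * x * ν = ((2 * π * x * ν : ℝ) : ℂ) * I by push_cast; ring,
    norm_exp_ofReal_mul_I]

theorem integrable_of_memLp_of_eq_zero_off_Icc {E : Type*} [NormedAddCommGroup E] {F : ℝ → E}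
    {p : ℝ≥0∞} (hp : 1 ≤ p) {a b : ℝ} (hF : MemLp F p volume)
    (hsupp : ∀ ν, ν ∉ Icc a b → F ν = 0) : Integrable F volume := by
  refine (integrableOn_iff_integrable_of_support_subset fun ν hν => ?_).mp
    ((hF.restrict (Icc a b)).integrable hp)
  by_contra h
  exact hν (hsupp ν h)

namespace IsPW

variable {Ω : ℝ} {f : ℝ → ℂ}

theorem continuous (hf : IsPW Ω f) : Continuous f := by
  obtain ⟨F, hF, hsupp, hrep⟩ := hf
  rw [funext hrep]
  refine continuous_of_dominated (fun x => hF.1.mul (by fun_prop))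
    (fun x => ae_of_all _ fun ν => ?_)
    (integrable_of_memLp_of_eq_zero_off_Icc one_le_two hF hsupp).norm
    (ae_of_all _ fun ν => by fun_prop)
  rw [norm_mul, norm_cexp_two_pi_I_mul_mul, mul_one]

theorem comp_add_left (hf : IsPW Ω f) (t : ℝ) : IsPW Ω (fun x => f (t + x)) := by
  obtain ⟨F, hF, hsupp, hrep⟩ := hf
  refine ⟨fun ν => F ν * Complex.exp (2 * π * I * t * ν), ?_, fun ν hν => by simp [hsupp ν hν],
    fun x => ?_⟩
  · refine hF.of_le (hF.1.mul (by fun_prop)) (ae_of_all _ fun ν => ?_)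
    rw [norm_mul, norm_cexp_two_pi_I_mul_mul, mul_one]
  · dsimp only
    rw [hrep]
    refine integral_congr_ae (ae_of_all _ fun ν => ?_)
    simp only [mul_assoc, ← Complex.exp_add]
    push_cast
    ring_nf

end IsPW

def IsSamplingSet (Ω A B : ℝ) (lam : ℤ → ℝ) : Prop :=
  ∀ f : ℝ → ℂ, IsPW Ω f → MemLp f 2 (volume : Measure ℝ) →
    A * (∫ x : ℝ, ‖f x‖ ^ 2) ≤ (∑' n : ℤ, ‖f (lam n)‖ ^ 2) ∧
    (∑' n : ℤ, ‖f (lam n)‖ ^ 2) ≤ B * ∫ x : ℝ, ‖f x‖ ^ 2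

namespace IsSamplingSet

variable {Ω A B : ℝ} {lam : ℤ → ℝ} {f : ℝ → ℂ}

theorem summable (hs : IsSamplingSet Ω A B lam) (hA : 0 < A) (hf : IsPW Ω f)
    (hf2 : MemLp f 2 volume) : Summable fun n => ‖f (lam n)‖ ^ 2 := by
  -- a non-summable series has `tsum = 0`, which forces `f = 0`
  by_contra hns
  have hlower := (hs f hf hf2).1
  rw [tsum_eq_zero_of_not_summable hns] at hlower
  have hzero : ∫ x, ‖f x‖ ^ 2 = 0 :=
    le_antisymm (nonpos_of_mul_nonpos_right hlower hA) (integral_nonneg fun x => by positivity)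
  rw [integral_eq_zero_iff_of_nonneg (fun x => by positivity)
    ((memLp_two_iff_integrable_sq_norm hf2.1).mp hf2)] at hzero
  have hf0 : f = 0 := (hf.continuous.ae_eq_iff_eq volume continuous_zero).mp <| by
    filter_upwards [hzero] with x hx
    simpa using hx
  exact hns (by simp [hf0])

theorem lintegral_bounds (hs : IsSamplingSet Ω A B lam) (hA : 0 < A) (hB : 0 < B)
    (hf : IsPW Ω f) (hf2 : MemLp f 2 volume) :
    ENNReal.ofReal A * ∫⁻ x, ‖f x‖ₑ ^ 2 ≤ ∑' n, ‖f (lam n)‖ₑ ^ 2 ∧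
      ∑' n, ‖f (lam n)‖ₑ ^ 2 ≤ ENNReal.ofReal B * ∫⁻ x, ‖f x‖ₑ ^ 2 := by
  have hsum : ∑' n, ‖f (lam n)‖ₑ ^ 2 = ENNReal.ofReal (∑' n, ‖f (lam n)‖ ^ 2) := by
    rw [ENNReal.ofReal_tsum_of_nonneg (fun n => by positivity) (hs.summable hA hf hf2)]
    simp_rw [ENNReal.ofReal_pow (norm_nonneg _), ofReal_norm]
  have hnorm : ∫⁻ x, ‖f x‖ₑ ^ 2 = ENNReal.ofReal (∫ x, ‖f x‖ ^ 2) := by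
    rw [integral_norm_sq_eq_toReal_lintegral hf2.1, ENNReal.ofReal_toReal
      ((memLp_two_iff_lintegral_enorm_sq_lt_top hf2.1).mp hf2).ne]
  obtain ⟨hlower, hupper⟩ := hs f hf hf2
  rw [hsum, hnorm, ← ENNReal.ofReal_mul hA.le, ← ENNReal.ofReal_mul hB.le]
  exact ⟨ENNReal.ofReal_le_ofReal hlower, ENNReal.ofReal_le_ofReal hupper⟩

theorem lintegral_bounds_translate (hs : IsSamplingSet Ω A B lam) (hA : 0 < A) (hB : 0 < B)
    (hf : IsPW Ω f) (hf2 : MemLp f 2 volume) (t : ℝ) :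
    ENNReal.ofReal A * ∫⁻ x, ‖f x‖ₑ ^ 2 ≤ ∑' n, ‖f (t + lam n)‖ₑ ^ 2 ∧
      ∑' n, ‖f (t + lam n)‖ₑ ^ 2 ≤ ENNReal.ofReal B * ∫⁻ x, ‖f x‖ₑ ^ 2 := by
  have := hs.lintegral_bounds hA hB (hf.comp_add_left t)
    (hf2.comp_measurePreserving (measurePreserving_add_left volume t))
  rwa [lintegral_add_left_eq_self (fun x => ‖f x‖ₑ ^ 2) t] at this

end IsSamplingSet

section Averages

variable {E : Type*} [NormedAddCommGroup E] [NormedSpace ℝ E] [CompleteSpace E]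

theorem Continuous.tendsto_inv_smul_setIntegral_Ioc {f : ℝ → E} (hf : Continuous f) (x : ℝ) :
    Tendsto (fun s => s⁻¹ • ∫ u in Ioc 0 s, f (x + u)) (𝓝[>] 0) (𝓝 (f x)) := by
  have hderiv : HasDerivAt (fun s => ∫ u in (0 : ℝ)..s, f (x + u)) (f (x + 0)) 0 :=
    ((hf.comp (continuous_const_add x)).integral_hasStrictDerivAt 0 0).hasDerivAt
  rw [add_zero] at hderiv
  refine ((hasDerivAt_iff_tendsto_slope.mp hderiv).mono_left
    (nhdsWithin_mono _ fun s hs => ne_of_gt hs)).congr' ?_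
  filter_upwards [self_mem_nhdsWithin] with s hs
  rw [slope_def_module, intervalIntegral.integral_same, sub_zero, sub_zero,
    intervalIntegral.integral_of_le (le_of_lt hs)]

variable {α : Type*} [MeasurableSpace α] {μ : Measure α}

theorem aestronglyMeasurable_apply_of_ae_continuous {h : α → ℝ → E}
    (hh : AEStronglyMeasurable (Function.uncurry h) (μ.prod volume))
    (hcont : ∀ᵐ t ∂μ, Continuous (h t)) {φ : α → ℝ} (hφ : Measurable φ) :
    AEStronglyMeasurable (fun t => h t (φ t)) μ := by
  -- The graph of `φ` is a null set, so `h t (φ t)` is recovered as the a.e. limit of averages of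
  -- a measurable modification `H` of `h` over `(φ t, φ t + 1 / (n + 1)]`.
  set H := hh.mk
  have hsec : ∀ᵐ t ∂μ, ∀ᵐ y, h t y = H (t, y) := Measure.ae_ae_of_ae_prod hh.ae_eq_mk
  have hδ : Tendsto (fun n : ℕ => 1 / ((n : ℝ) + 1)) atTop (𝓝[>] 0) :=
    tendsto_nhdsWithin_iff.mpr ⟨tendsto_one_div_add_atTop_nhds_zero_nat,
      Eventually.of_forall fun n => mem_Ioi.mpr (by positivity)⟩
  refine aestronglyMeasurable_of_tendsto_ae atTop
    (f := fun (n : ℕ) t =>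
      (1 / ((n : ℝ) + 1))⁻¹ • ∫ u in Ioc 0 (1 / ((n : ℝ) + 1)), H (t, φ t + u))
    (fun n => ?_) ?_
  · have hH : StronglyMeasurable fun p : α × ℝ => H (p.1, φ p.1 + p.2) :=
      hh.stronglyMeasurable_mk.comp_measurable (by fun_prop)
    exact hH.integral_prod_right'.aestronglyMeasurable.const_smul _
  · filter_upwards [hcont, hsec] with t hct hst
    have hshift : (fun u => h t (φ t + u)) =ᵐ[volume] fun u => H (t, φ t + u) :=
      (measurePreserving_add_left volume (φ t)).quasiMeasurePreserving.ae_eq_comp hst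
    have hlim := (hct.tendsto_inv_smul_setIntegral_Ioc (φ t)).comp hδ
    refine hlim.congr fun n => ?_
    simp only [Function.comp_apply]
    rw [setIntegral_congr_ae measurableSet_Ioc (hshift.mono fun u hu _ => hu)]

end Averages

theorem enorm_tsum_pow_of_support_subsingleton {ι E : Type*} [NormedAddCommGroup E]
    {f : ι → E} (hf : (Function.support f).Subsingleton) {n : ℕ} (hn : n ≠ 0) :
    ‖∑' i, f i‖ₑ ^ n = ∑' i, ‖f i‖ₑ ^ n := by
  rcases hf.eq_empty_or_singleton with hempty | ⟨i₀, hi₀⟩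
  · have hf0 : f = 0 := Function.support_eq_empty_iff.mp hempty
    simp [hf0, hn]
  · have hzero : ∀ i, i ≠ i₀ → f i = 0 := fun i hi =>
      Function.notMem_support.mp fun hmem => hi (by rwa [hi₀] at hmem)
    rw [tsum_eq_single i₀ hzero, tsum_eq_single i₀ fun i hi => by simp [hzero i hi, hn]]

section Separated

variable {T : ℝ} {lam : ℤ → ℝ}

theorem add_le_of_lt_of_forall_le_sub_succ (hT : 0 ≤ T) (hsep : ∀ k, T ≤ lam (k + 1) - lam k)
    {j k : ℤ} (hjk : j < k) : lam j + T ≤ lam k := by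
  induction k, hjk using Int.leInduction with
  | base => linarith [hsep j]
  | succ k _ ih => linarith [hsep k]

variable {E : Type*} [NormedAddCommGroup E] {h : ℝ → ℝ → E}

theorem support_subsingleton_of_forall_le_sub_succ (hT : 0 ≤ T)
    (hsep : ∀ k, T ≤ lam (k + 1) - lam k) (hsupp : ∀ t x, t ∉ Icc 0 T → h t x = 0) {x : ℝ}
    (hx : x ∉ range lam) : (Function.support fun k => h (x - lam k) x).Subsingleton := by
  intro j hj k hk
  have hmem : ∀ i ∈ Function.support fun k => h (x - lam k) x, lam i ≤ x ∧ x ≤ lam i + T :=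
    fun i hi => by
      have := mem_Icc.mp (not_not.mp (mt (hsupp _ x) hi))
      constructor <;> linarith [this.1, this.2]
  obtain ⟨hj1, hj2⟩ := hmem j hj
  obtain ⟨hk1, hk2⟩ := hmem k hk
  by_contra hne
  rcases lt_or_gt_of_ne hne with hlt | hlt
  · exact hx ⟨k, le_antisymm hk1 (by linarith [add_le_of_lt_of_forall_le_sub_succ hT hsep hlt])⟩
  · exact hx ⟨j, le_antisymm hj1 (by linarith [add_le_of_lt_of_forall_le_sub_succ hT hsep hlt])⟩

theorem aestronglyMeasurable_sub_apply {e : ℝ}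
    (hdiag : AEStronglyMeasurable (fun t => h t (t + e)) volume) :
    AEStronglyMeasurable (fun x => h (x - e) x) volume := by
  have := hdiag.comp_quasiMeasurePreserving
    (measurePreserving_sub_right volume e).quasiMeasurePreserving
  simpa only [Function.comp_def, sub_add_cancel] using this

theorem lintegral_enorm_sq_tsum_sub_eq (hT : 0 ≤ T) (hsep : ∀ k, T ≤ lam (k + 1) - lam k)
    (hsupp : ∀ t x, t ∉ Icc 0 T → h t x = 0)
    (hdiag : ∀ e, AEStronglyMeasurable (fun t => h t (t + e)) volume) :
    ∫⁻ x, ‖∑' k, h (x - lam k) x‖ₑ ^ 2 = ∫⁻ t, ∑' k, ‖h t (t + lam k)‖ₑ ^ 2 := by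
  have hrange : ∀ᵐ x, x ∉ range lam :=
    measure_eq_zero_iff_ae_notMem.mp ((countable_range lam).measure_zero _)
  calc ∫⁻ x, ‖∑' k, h (x - lam k) x‖ₑ ^ 2
      = ∫⁻ x, ∑' k, ‖h (x - lam k) x‖ₑ ^ 2 := lintegral_congr_ae <| by
        filter_upwards [hrange] with x hx
        exact enorm_tsum_pow_of_support_subsingleton
          (support_subsingleton_of_forall_le_sub_succ hT hsep hsupp hx) two_ne_zero
    _ = ∑' k, ∫⁻ t, ‖h t (t + lam k)‖ₑ ^ 2 := by
        rw [lintegral_tsum fun k =>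
          (aestronglyMeasurable_sub_apply (hdiag (lam k))).enorm.pow_const 2]
        refine tsum_congr fun k => ?_
        simpa using lintegral_sub_right_eq_self (fun t => ‖h t (t + lam k)‖ₑ ^ 2) (lam k)
    _ = ∫⁻ t, ∑' k, ‖h t (t + lam k)‖ₑ ^ 2 :=
        (lintegral_tsum fun k => (hdiag (lam k)).enorm.pow_const 2).symm

end Separated

theorem irregular_operator_sampling_sufficient_general (T Ω : ℝ) (hT : 0 < T)
    (lam : ℤ → ℝ) (hsep : ∀ k : ℤ, T ≤ lam (k + 1) - lam k)
    (A B : ℝ) (hA : 0 < A) (hB : 0 < B)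
    (hsampPW : ∀ f : ℝ → ℂ, IsPW Ω f → MemLp f 2 (volume : Measure ℝ) →
      A * (∫ x : ℝ, ‖f x‖ ^ 2) ≤ (∑' n : ℤ, ‖f (lam n)‖ ^ 2) ∧
      (∑' n : ℤ, ‖f (lam n)‖ ^ 2) ≤ B * ∫ x : ℝ, ‖f x‖ ^ 2) :
    ∃ c C : ℝ, 0 < c ∧ 0 < C ∧ ∀ h : ℝ → ℝ → ℂ,
      MemLp (Function.uncurry h) 2 (volume : Measure (ℝ × ℝ)) →
      (∀ t x : ℝ, t ∉ Set.Icc 0 T → h t x = 0) →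
      (∀ᵐ t : ℝ, IsPW Ω (h t)) →
      c * (∫ p : ℝ × ℝ, ‖Function.uncurry h p‖ ^ 2) ≤
          (∫ x : ℝ, ‖∑' k : ℤ, h (x - lam k) x‖ ^ 2) ∧
      (∫ x : ℝ, ‖∑' k : ℤ, h (x - lam k) x‖ ^ 2) ≤
          C * ∫ p : ℝ × ℝ, ‖Function.uncurry h p‖ ^ 2 := by
  refine ⟨A, B, hA, hB, fun h hh hsupp hPW => ?_⟩
  rw [Measure.volume_eq_prod] at hh ⊢
  have hdiag (e : ℝ) : AEStronglyMeasurable (fun t => h t (t + e)) volume :=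
    aestronglyMeasurable_apply_of_ae_continuous hh.1 (hPW.mono fun t ht => ht.continuous)
      (measurable_add_const e)
  have hbounds : ∀ᵐ t, ENNReal.ofReal A * ∫⁻ x, ‖h t x‖ₑ ^ 2 ≤ ∑' k, ‖h t (t + lam k)‖ₑ ^ 2 ∧
      ∑' k, ‖h t (t + lam k)‖ₑ ^ 2 ≤ ENNReal.ofReal B * ∫⁻ x, ‖h t x‖ₑ ^ 2 := by
    filter_upwards [hPW, MemLp.prod_right_ae two_ne_zero ENNReal.ofNat_ne_top hh] with t hpw hsec
    exact IsSamplingSet.lintegral_bounds_translate hsampPW hA hB hpw hsec t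
  have hnorm : ∫⁻ p, ‖Function.uncurry h p‖ₑ ^ 2 ∂volume.prod volume
      = ∫⁻ t, ∫⁻ x, ‖h t x‖ₑ ^ 2 := lintegral_prod _ (hh.1.enorm.pow_const 2)
  have hg : AEStronglyMeasurable (fun x => ∑' k, h (x - lam k) x) volume :=
    (AEMeasurable.tsum fun k => (aestronglyMeasurable_sub_apply (hdiag (lam k))).aemeasurable
      ).aestronglyMeasurable
  rw [integral_norm_sq_eq_toReal_lintegral hh.1, integral_norm_sq_eq_toReal_lintegral hg, hnorm,
    lintegral_enorm_sq_tsum_sub_eq hT.le hsep hsupp hdiag]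
  exact toReal_lintegral_bounds_of_ae_bounds hA.le hB.le
    (hnorm ▸ (memLp_two_iff_lintegral_enorm_sq_lt_top hh.1).mp hh).ne hbounds

theorem irregular_operator_sampling_sufficient (T Ω : ℝ) (hT : 0 < T) (hΩ : 0 < Ω)
    (lam : ℤ → ℝ) (hsep : ∀ k : ℤ, T ≤ lam (k + 1) - lam k)
    (A B : ℝ) (hA : 0 < A) (hB : 0 < B)
    (hsampPW : ∀ f : ℝ → ℂ, IsPW Ω f → MemLp f 2 (volume : Measure ℝ) →
      A * (∫ x : ℝ, ‖f x‖ ^ 2) ≤ (∑' n : ℤ, ‖f (lam n)‖ ^ 2) ∧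
      (∑' n : ℤ, ‖f (lam n)‖ ^ 2) ≤ B * ∫ x : ℝ, ‖f x‖ ^ 2) :
    ∃ c C : ℝ, 0 < c ∧ 0 < C ∧ ∀ h : ℝ → ℝ → ℂ,
      MemLp (Function.uncurry h) 2 (volume : Measure (ℝ × ℝ)) →
      (∀ t x : ℝ, t ∉ Set.Icc 0 T → h t x = 0) →
      (∀ᵐ t : ℝ, IsPW Ω (h t)) →
      c * (∫ p : ℝ × ℝ, ‖Function.uncurry h p‖ ^ 2) ≤
          (∫ x : ℝ, ‖∑' k : ℤ, h (x - lam k) x‖ ^ 2) ∧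
      (∫ x : ℝ, ‖∑' k : ℤ, h (x - lam k) x‖ ^ 2) ≤
          C * ∫ p : ℝ × ℝ, ‖Function.uncurry h p‖ ^ 2 :=
  irregular_operator_sampling_sufficient_general T Ω hT lam hsep A B hA hB hsampPW
end
end

section
/- Let T > 0 and let V be a reproducing kernel Hilbert subspace of L²(ℝ) with reproducing kernel k(s,t), such that for every t ∈ [0,T] the family {k(·, t+nT)}_{n∈ℤ} is a frame for V with frame bounds uniform in t. Let h ∈ L²(ℝ²) with supp h(·,x) ⊆ [0,T] and h(t,·) ∈ V for a.e. t ∈ [0,T]. Then ‖h‖²_{L²(ℝ²)} ≍ ∫_ℝ |g(x)|² dx, where g(x) = Σ_{k∈ℤ} h(x − kT, x). -/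
/-!
Although `h` is only an a.e.-defined function on `ℝ²`, its diagonals `t ↦ h t (t + c)` are
measurable: by the reproducing property, `h t (t + c) = ⟪k(·, t + c), h t⟫`, a pairing of two
`L²`-valued maps that are weakly, hence by Pettis' theorem strongly, measurable.
Cutting `ℝ` into the translates `(nT, nT + T)`, the support condition gives
`g (t + nT) = h t (t + nT)` for `t ∈ (0, T)`, so `∫ ‖g‖² = ∫₀ᵀ ∑ₙ ‖h t (t + nT)‖² dt`.
The frame inequality for the slice `h t ∈ V` bounds the inner sum by `A ∫ ‖h t‖²` and
`B ∫ ‖h t‖²`, and integrating in `t` gives the claim with `c = A`, `C = B`.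
-/

open MeasureTheory Complex Real
open Filter TopologicalSpace Submodule Set
open scoped ENNReal Pointwise

noncomputable section

section Pettis

variable {𝕜 E : Type*} [RCLike 𝕜] [NormedAddCommGroup E] [InnerProductSpace 𝕜 E]

theorem Orthonormal.countable [SeparableSpace E] {ι : Type*} {v : ι → E}
    (hv : Orthonormal 𝕜 v) : Countable ι := by
  refine Pairwise.countable_of_isOpen_disjoint (s := fun i => Metric.ball (v i) (1 / 2))
    (fun i j hij => Metric.ball_disjoint_ball ?_) (fun _ => Metric.isOpen_ball)
    (fun _ => Metric.nonempty_ball.2 one_half_pos)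
  have hsq : dist (v i) (v j) ^ 2 = 2 := by
    rw [dist_eq_norm, @norm_sub_sq 𝕜, hv.2 hij, hv.1 i, hv.1 j]
    norm_num
  nlinarith [dist_nonneg (x := v i) (y := v j)]

variable {α : Type*} {m : MeasurableSpace α} {μ : Measure α}

/-- Pettis' theorem for separable Hilbert spaces. -/
theorem aestronglyMeasurable_of_forall_inner [CompleteSpace E] [SeparableSpace E] {f : α → E}
    (hf : ∀ y, AEStronglyMeasurable (fun x => inner 𝕜 y (f x)) μ) : AEStronglyMeasurable f μ := by
  obtain ⟨w, b, -⟩ := exists_hilbertBasis 𝕜 E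
  have : Countable w := b.orthonormal.countable
  refine aestronglyMeasurable_of_tendsto_ae atTop
    (fun s : Finset w => s.aestronglyMeasurable_sum fun i _ => (hf (b i)).smul_const (b i))
    (ae_of_all _ fun x => ?_)
  have hx := b.hasSum_repr (f x)
  simp only [b.repr_apply_apply] at hx
  simp only [Finset.sum_apply]
  exact hx

theorem aestronglyMeasurable_inner_of_mem_closure_span {S : Set E} {f : α → E}
    (hS : ∀ y ∈ S, AEStronglyMeasurable (fun x => inner 𝕜 y (f x)) μ) {y : E}
    (hy : y ∈ (span 𝕜 S).topologicalClosure) :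
    AEStronglyMeasurable (fun x => inner 𝕜 y (f x)) μ := by
  have hspan : ∀ z ∈ span 𝕜 S, AEStronglyMeasurable (fun x => inner 𝕜 z (f x)) μ := by
    intro z hz
    induction hz using Submodule.span_induction with
    | mem z hz => exact hS z hz
    | zero => simpa only [inner_zero_left] using aestronglyMeasurable_const
    | add z z' _ _ hz hz' => simp only [inner_add_left]; exact hz.add hz'
    | smul a z _ hz => simp only [inner_smul_left]; exact aestronglyMeasurable_const.mul hz
  obtain ⟨u, hu, hlim⟩ := mem_closure_iff_seq_limit.1 hy
  exact aestronglyMeasurable_of_tendsto_ae atTop (fun n => hspan _ (hu n))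
    (ae_of_all _ fun x => hlim.inner tendsto_const_nhds)

theorem aestronglyMeasurable_of_inner_of_mem_closure_span [CompleteSpace E] [SeparableSpace E]
    {S : Set E} {f : α → E} (hfS : ∀ x, f x ∈ (span 𝕜 S).topologicalClosure)
    (hS : ∀ y ∈ S, AEStronglyMeasurable (fun x => inner 𝕜 y (f x)) μ) :
    AEStronglyMeasurable f μ := by
  set K := (span 𝕜 S).topologicalClosure
  refine aestronglyMeasurable_of_forall_inner (𝕜 := 𝕜) fun y => ?_
  have hK : ∀ x, inner 𝕜 y (f x) = inner 𝕜 (K.starProjection y) (f x) := fun x => by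
    rw [K.inner_starProjection_left_eq_right, K.starProjection_eq_self_iff.2 (hfS x)]
  simpa only [← hK] using
    aestronglyMeasurable_inner_of_mem_closure_span hS (K.starProjection_apply_mem y)

end Pettis

theorem exists_aestronglyMeasurable_toLp_slice {α β : Type*} [MeasurableSpace α]
    [MeasurableSpace β] {μ : Measure α} {ν : Measure β} [SFinite ν]
    [MeasureTheory.IsSeparable ν] {h : α → β → ℂ}
    (hh : AEStronglyMeasurable (Function.uncurry h) (μ.prod ν)) (h2 : ∀ᵐ t ∂μ, MemLp (h t) 2 ν) :
    ∃ F : α → Lp ℂ 2 ν, AEStronglyMeasurable F μ ∧ ∀ᵐ t ∂μ, F t =ᵐ[ν] h t := by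
  classical
  have : Fact ((2 : ℝ≥0∞) ≠ ∞) := ⟨ENNReal.ofNat_ne_top⟩
  let F : α → Lp ℂ 2 ν := fun t => if ht : MemLp (h t) 2 ν then ht.toLp else 0
  have hF : ∀ᵐ t ∂μ, F t =ᵐ[ν] h t := h2.mono fun t ht => by
    simpa only [F, dif_pos ht] using ht.coeFn_toLp
  refine ⟨F, aestronglyMeasurable_of_forall_inner (𝕜 := ℂ) fun y => ?_, hF⟩
  have hy : AEStronglyMeasurable (fun p : α × β => (starRingEnd ℂ) (y p.2)) (μ.prod ν) :=
    (continuous_conj.comp_aestronglyMeasurable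
      (Lp.aestronglyMeasurable y)).comp_quasiMeasurePreserving Measure.quasiMeasurePreserving_snd
  refine (hy.mul hh).integral_prod_right'.congr (hF.mono fun t ht => ?_)
  change ∫ s, (starRingEnd ℂ) (y s) * h t s ∂ν = inner ℂ y (F t)
  rw [L2.inner_def]
  exact integral_congr_ae (ht.mono fun s hs => by simp only [RCLike.inner_apply, hs, mul_comm])

-- `∑'` is `0` on a non-summable family, so a lower bound on it does not give summability alone.
theorem summable_of_mul_le_tsum {ι : Type*} {a : ι → ℝ} {A X : ℝ}
    (hA : 0 < A) (hX : 0 ≤ X) (hzero : X = 0 → ∀ i, a i = 0) (hlow : A * X ≤ ∑' i, a i) :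
    Summable a := by
  by_contra hns
  rw [tsum_eq_zero_of_not_summable hns] at hlow
  exact hns ((summable_congr (hzero (by nlinarith))).2 summable_zero)

section ReproducingKernel

variable {α β : Type*} [MeasurableSpace α] [MeasurableSpace β] {ν : Measure β}
  {V : Set (β → ℂ)} {k : β → β → ℂ}

def kernelLp (hk : ∀ t, MemLp (fun s => k s t) 2 ν) (t : β) : Lp ℂ 2 ν :=
  (hk t).toLp _

variable (hk : ∀ t, MemLp (fun s => k s t) 2 ν)
  (hrepro : ∀ f ∈ V, ∀ t, f t = ∫ s, f s * (starRingEnd ℂ) (k s t) ∂ν)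
include hrepro

theorem inner_kernelLp_of_ae_eq {f : β → ℂ} (hfV : f ∈ V) {φ : Lp ℂ 2 ν} (hφ : φ =ᵐ[ν] f)
    (t : β) : inner ℂ (kernelLp hk t) φ = f t := by
  rw [hrepro f hfV t, L2.inner_def]
  refine integral_congr_ae ?_
  filter_upwards [(hk t).coeFn_toLp, hφ] with s hks hφs
  rw [kernelLp, RCLike.inner_apply, hks, hφs, mul_comm]

theorem aestronglyMeasurable_kernelLp [MeasureTheory.IsSeparable ν]
    (hkV : ∀ t, (fun s => k s t) ∈ V) : AEStronglyMeasurable (kernelLp hk) ν := by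
  have : Fact ((2 : ℝ≥0∞) ≠ ∞) := ⟨ENNReal.ofNat_ne_top⟩
  refine aestronglyMeasurable_of_inner_of_mem_closure_span (𝕜 := ℂ) (S := range (kernelLp hk))
    (fun t => le_topologicalClosure _ (subset_span ⟨t, rfl⟩)) ?_
  rintro _ ⟨u, rfl⟩
  have hconj (t : β) : inner ℂ (kernelLp hk u) (kernelLp hk t) = (starRingEnd ℂ) (k t u) := by
    rw [← inner_conj_symm, inner_kernelLp_of_ae_eq hk hrepro (hkV u)
      (φ := kernelLp hk u) (hk u).coeFn_toLp]
  simpa only [hconj] using continuous_conj.comp_aestronglyMeasurable (hk u).1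

theorem aestronglyMeasurable_apply_comp {μ : Measure α} [SFinite ν]
    [MeasureTheory.IsSeparable ν] (hVL2 : ∀ f ∈ V, MemLp f 2 ν) (hkV : ∀ t, (fun s => k s t) ∈ V)
    {h : α → β → ℂ} (hh : AEStronglyMeasurable (Function.uncurry h) (μ.prod ν))
    (hV : ∀ᵐ t ∂μ, h t ∈ V) {σ : α → β} (hσ : Measure.QuasiMeasurePreserving σ μ ν) :
    AEStronglyMeasurable (fun t => h t (σ t)) μ := by
  obtain ⟨F, hFm, hF⟩ := exists_aestronglyMeasurable_toLp_slice hh (hV.mono fun t => hVL2 (h t))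
  have hk : ∀ t, MemLp (fun s => k s t) 2 ν := fun t => hVL2 _ (hkV t)
  refine (((aestronglyMeasurable_kernelLp hk hrepro hkV).comp_quasiMeasurePreserving hσ).inner
    hFm).congr ?_
  filter_upwards [hV, hF] with t htV htF
  exact inner_kernelLp_of_ae_eq hk hrepro htV htF (σ t)

theorem ofReal_frame_bounds {ι : Type*} {f : β → ℂ} (hfV : f ∈ V) (hf : MemLp f 2 ν)
    {x : ι → β} {A B : ℝ} (hA : 0 < A) (hB : 0 ≤ B)
    (hframe : A * ∫ s, ‖f s‖ ^ 2 ∂ν ≤ ∑' n, ‖∫ s, f s * (starRingEnd ℂ) (k s (x n)) ∂ν‖ ^ 2 ∧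
      ∑' n, ‖∫ s, f s * (starRingEnd ℂ) (k s (x n)) ∂ν‖ ^ 2 ≤ B * ∫ s, ‖f s‖ ^ 2 ∂ν) :
    ENNReal.ofReal A * ∫⁻ s, ENNReal.ofReal (‖f s‖ ^ 2) ∂ν ≤
        ∑' n, ENNReal.ofReal (‖f (x n)‖ ^ 2) ∧
      ∑' n, ENNReal.ofReal (‖f (x n)‖ ^ 2) ≤
        ENNReal.ofReal B * ∫⁻ s, ENNReal.ofReal (‖f s‖ ^ 2) ∂ν := by
  simp only [← hrepro f hfV] at hframe
  obtain ⟨hlow, hup⟩ := hframe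
  have hint : Integrable (fun s => ‖f s‖ ^ 2) ν := (memLp_two_iff_integrable_sq_norm hf.1).1 hf
  have hzero : ∫ s, ‖f s‖ ^ 2 ∂ν = 0 → ∀ n, ‖f (x n)‖ ^ 2 = 0 := by
    intro h0 n
    have hf0 : f =ᵐ[ν] 0 := by
      filter_upwards [(integral_eq_zero_iff_of_nonneg (fun s => sq_nonneg _) hint).1 h0] with s hs
      simpa using hs
    rw [hrepro f hfV, integral_eq_zero_of_ae (hf0.mono fun s hs => by simp [hs])]
    simp
  have hsum := summable_of_mul_le_tsum hA (integral_nonneg fun s => sq_nonneg _) hzero hlow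
  rw [← ofReal_integral_eq_lintegral_ofReal hint (ae_of_all _ fun s => sq_nonneg _),
    ← ENNReal.ofReal_tsum_of_nonneg (fun n => sq_nonneg _) hsum, ← ENNReal.ofReal_mul hA.le,
    ← ENNReal.ofReal_mul hB]
  exact ⟨ENNReal.ofReal_le_ofReal hlow, ENNReal.ofReal_le_ofReal hup⟩

end ReproducingKernel

theorem volume_eq_sum_map_restrict_Ioo {T : ℝ} (hT : 0 < T) :
    (volume : Measure ℝ) =
      Measure.sum fun n : ℤ => (volume.restrict (Ioo 0 T)).map (· + n * T) := by
  let e : ℤ ≃ AddSubgroup.zmultiples T := Equiv.ofBijective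
    (fun n => ⟨n * T, n, zsmul_eq_mul _ _⟩)
    ⟨fun m n hmn => by simpa [hT.ne'] using congrArg Subtype.val hmn,
     fun ⟨_, n, hn⟩ => ⟨n, Subtype.ext (by simp [← hn, zsmul_eq_mul])⟩⟩
  calc (volume : Measure ℝ)
      = Measure.sum fun g : AddSubgroup.zmultiples T => volume.restrict (g +ᵥ Ioc 0 (0 + T)) :=
        (isAddFundamentalDomain_Ioc hT 0).sum_restrict.symm
    _ = Measure.sum fun n : ℤ => volume.restrict (e n +ᵥ Ioc 0 (0 + T)) :=
        (Measure.sum_comp_equiv e _).symm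
    _ = _ := by
      refine congrArg Measure.sum (funext fun n => ?_)
      rw [Measure.restrict_congr_set Ioo_ae_eq_Ioc,
        ((measurePreserving_add_right volume (n * T)).restrict_image_emb
          (measurableEmbedding_addRight _) (Ioc 0 T)).map_eq]
      congr 1
      change ((n : ℝ) * T) +ᵥ Ioc 0 (0 + T) = _
      rw [zero_add, ← Set.image_vadd]
      simp only [vadd_eq_add, add_comm]

theorem lintegral_eq_tsum_setLIntegral_Ioo_add {T : ℝ} (hT : 0 < T) (F : ℝ → ℝ≥0∞) :
    ∫⁻ x, F x = ∑' n : ℤ, ∫⁻ t in Ioo 0 T, F (t + n * T) := by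
  conv_lhs => rw [volume_eq_sum_map_restrict_Ioo hT, lintegral_sum_measure]
  simp only [(measurableEmbedding_addRight _).lintegral_map]

theorem aestronglyMeasurable_of_forall_Ioo_add {E : Type*} [TopologicalSpace E]
    [PseudoMetrizableSpace E] {T : ℝ} (hT : 0 < T) {F : ℝ → E}
    (hF : ∀ n : ℤ, AEStronglyMeasurable (fun t => F (t + n * T)) (volume.restrict (Ioo 0 T))) :
    AEStronglyMeasurable F volume := by
  rw [volume_eq_sum_map_restrict_Ioo hT, aestronglyMeasurable_sum_measure_iff]
  exact fun n => (measurableEmbedding_addRight _).aestronglyMeasurable_map_iff.2 (hF n)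

theorem tsum_sub_mul_eq_of_mem_Ioo {E : Type*} [AddCommMonoid E] [TopologicalSpace E]
    {T : ℝ} {h : ℝ → ℝ → E} (hsupp : ∀ t x, t ∉ Icc 0 T → h t x = 0) {t : ℝ} (ht : t ∈ Ioo 0 T)
    (n : ℤ) : ∑' m : ℤ, h (t + n * T - m * T) (t + n * T) = h t (t + n * T) := by
  rw [tsum_eq_single n fun m hmn => hsupp _ _ fun hm => hmn ?_, add_sub_cancel_right]
  have hT : 0 < T := ht.1.trans ht.2
  have hmn : ((m - n : ℤ) : ℝ) * T < 1 * T := by push_cast; linarith [hm.1, ht.2]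
  have hnm : ((n - m : ℤ) : ℝ) * T < 1 * T := by push_cast; linarith [hm.2, ht.1]
  have h1 := lt_of_mul_lt_mul_right hmn hT.le
  have h2 := lt_of_mul_lt_mul_right hnm hT.le
  norm_cast at h1 h2
  omega

theorem aestronglyMeasurable_tsum_sub_mul {E : Type*} [NormedAddCommGroup E] {T : ℝ} (hT : 0 < T)
    {h : ℝ → ℝ → E} (hsupp : ∀ t x, t ∉ Icc 0 T → h t x = 0)
    (hdiag : ∀ c : ℝ, AEStronglyMeasurable (fun t => h t (t + c)) (volume.restrict (Ioo 0 T))) :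
    AEStronglyMeasurable (fun x => ∑' n : ℤ, h (x - n * T) x) volume :=
  aestronglyMeasurable_of_forall_Ioo_add hT fun n => (hdiag (n * T)).congr <|
    (ae_restrict_mem measurableSet_Ioo).mono fun _ ht => (tsum_sub_mul_eq_of_mem_Ioo hsupp ht n).symm

theorem lintegral_norm_sq_tsum_sub_mul {E : Type*} [NormedAddCommGroup E] {T : ℝ} (hT : 0 < T)
    {h : ℝ → ℝ → E} (hsupp : ∀ t x, t ∉ Icc 0 T → h t x = 0)
    (hdiag : ∀ c : ℝ, AEStronglyMeasurable (fun t => h t (t + c)) (volume.restrict (Ioo 0 T))) :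
    ∫⁻ x, ENNReal.ofReal (‖∑' n : ℤ, h (x - n * T) x‖ ^ 2) =
      ∫⁻ t in Ioo 0 T, ∑' n : ℤ, ENNReal.ofReal (‖h t (t + n * T)‖ ^ 2) := by
  rw [lintegral_eq_tsum_setLIntegral_Ioo_add hT,
    lintegral_tsum fun n => ((hdiag _).norm.aemeasurable.pow_const 2).ennreal_ofReal]
  refine tsum_congr fun n => setLIntegral_congr_fun measurableSet_Ioo fun t ht => ?_
  rw [tsum_sub_mul_eq_of_mem_Ioo hsupp ht n]

theorem lintegral_eq_setLIntegral_Ioo_lintegral {T : ℝ} {F : ℝ × ℝ → ℝ≥0∞} (hF : AEMeasurable F)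
    (hsupp : ∀ t x, t ∉ Icc 0 T → F (t, x) = 0) :
    ∫⁻ p, F p = ∫⁻ t in Ioo 0 T, ∫⁻ x, F (t, x) := by
  rw [Measure.volume_eq_prod, lintegral_prod _ hF, setLIntegral_congr Ioo_ae_eq_Icc,
    setLIntegral_eq_of_support_subset]
  intro t ht
  by_contra ht'
  exact ht (by simp [hsupp t _ ht'])

theorem toReal_bounds_of_ofReal_bounds {a b : ℝ≥0∞} {A B : ℝ} (hA : 0 ≤ A) (hB : 0 ≤ B)
    (ha : a ≠ ∞) (hlow : ENNReal.ofReal A * a ≤ b) (hup : b ≤ ENNReal.ofReal B * a) :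
    A * a.toReal ≤ b.toReal ∧ b.toReal ≤ B * a.toReal := by
  have hb : b ≠ ∞ := ne_top_of_le_ne_top (ENNReal.mul_ne_top ENNReal.ofReal_ne_top ha) hup
  constructor
  · simpa [ENNReal.toReal_mul, ENNReal.toReal_ofReal hA] using ENNReal.toReal_mono hb hlow
  · simpa [ENNReal.toReal_mul, ENNReal.toReal_ofReal hB] using
      ENNReal.toReal_mono (ENNReal.mul_ne_top ENNReal.ofReal_ne_top ha) hup

theorem rkhs_operator_sampling (T : ℝ) (hT : 0 < T)
    (V : Set (ℝ → ℂ)) (k : ℝ → ℝ → ℂ)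
    (hVL2 : ∀ f ∈ V, MemLp f 2 (volume : Measure ℝ))
    (hkV : ∀ t : ℝ, (fun s => k s t) ∈ V)
    -- reproducing property
    (hrepro : ∀ f ∈ V, ∀ t : ℝ, f t = ∫ s : ℝ, f s * (starRingEnd ℂ) (k s t))
    (A B : ℝ) (hA : 0 < A) (hB : 0 < B)
    -- `{k(·, t+nT)}ₙ` is a frame for `V`, with bounds uniform in `t ∈ [0,T]`
    (hframe : ∀ t ∈ Set.Icc (0 : ℝ) T, ∀ f ∈ V,
      A * (∫ s : ℝ, ‖f s‖ ^ 2) ≤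
        (∑' n : ℤ, ‖∫ s : ℝ, f s * (starRingEnd ℂ) (k s (t + n * T))‖ ^ 2) ∧
      (∑' n : ℤ, ‖∫ s : ℝ, f s * (starRingEnd ℂ) (k s (t + n * T))‖ ^ 2) ≤
        B * ∫ s : ℝ, ‖f s‖ ^ 2) :
    ∃ c C : ℝ, 0 < c ∧ 0 < C ∧ ∀ h : ℝ → ℝ → ℂ,
      MemLp (Function.uncurry h) 2 (volume : Measure (ℝ × ℝ)) →
      (∀ t x : ℝ, t ∉ Set.Icc 0 T → h t x = 0) →
      (∀ᵐ t ∂(volume.restrict (Set.Icc (0 : ℝ) T)), h t ∈ V) →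
      c * (∫ p : ℝ × ℝ, ‖Function.uncurry h p‖ ^ 2) ≤
        (∫ x : ℝ, ‖∑' n : ℤ, h (x - n * T) x‖ ^ 2) ∧
      (∫ x : ℝ, ‖∑' n : ℤ, h (x - n * T) x‖ ^ 2) ≤
        C * ∫ p : ℝ × ℝ, ‖Function.uncurry h p‖ ^ 2 := by
  refine ⟨A, B, hA, hB, fun h hh hsupp hV => ?_⟩
  set μT := volume.restrict (Ioo (0 : ℝ) T)
  have hVT : ∀ᵐ t ∂μT, h t ∈ V := ae_restrict_of_ae_restrict_of_subset Ioo_subset_Icc_self hV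
  have hhT : AEStronglyMeasurable (Function.uncurry h) (μT.prod volume) := by
    rw [Measure.restrict_prod_eq_prod_univ]
    exact hh.1.restrict
  have hdiag (c : ℝ) : AEStronglyMeasurable (fun t => h t (t + c)) μT :=
    aestronglyMeasurable_apply_comp hrepro hVL2 hkV hhT hVT
      ((measurePreserving_add_right volume c).quasiMeasurePreserving.mono_left
        Measure.restrict_le_self.absolutelyContinuous)
  have hbounds : ∀ᵐ t ∂μT, ENNReal.ofReal A * ∫⁻ s, ENNReal.ofReal (‖h t s‖ ^ 2) ≤
        ∑' n : ℤ, ENNReal.ofReal (‖h t (t + n * T)‖ ^ 2) ∧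
      ∑' n : ℤ, ENNReal.ofReal (‖h t (t + n * T)‖ ^ 2) ≤
        ENNReal.ofReal B * ∫⁻ s, ENNReal.ofReal (‖h t s‖ ^ 2) := by
    filter_upwards [hVT, ae_restrict_mem measurableSet_Ioo] with t htV ht
    exact ofReal_frame_bounds hrepro htV (hVL2 _ htV) (x := fun n : ℤ => t + n * T) hA hB.le
      (hframe t (Ioo_subset_Icc_self ht) _ htV)
  have hH := lintegral_eq_setLIntegral_Ioo_lintegral (T := T)
    (hh.1.norm.aemeasurable.pow_const 2).ennreal_ofReal fun t x ht => by simp [hsupp t x ht]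
  rw [integral_eq_lintegral_of_nonneg_ae (ae_of_all _ fun _ => sq_nonneg _) (hh.1.norm.pow 2),
    integral_eq_lintegral_of_nonneg_ae (ae_of_all _ fun _ => sq_nonneg _)
      ((aestronglyMeasurable_tsum_sub_mul hT hsupp hdiag).norm.pow 2)]
  refine toReal_bounds_of_ofReal_bounds hA.le hB.le
    ((memLp_two_iff_integrable_sq_norm hh.1).1 hh).lintegral_lt_top.ne ?_ ?_
  all_goals rw [hH, lintegral_norm_sq_tsum_sub_mul hT hsupp hdiag,
    ← lintegral_const_mul' _ _ ENNReal.ofReal_ne_top]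
  · exact lintegral_mono_ae (hbounds.mono fun t ht => ht.1)
  · exact lintegral_mono_ae (hbounds.mono fun t ht => ht.2)
end
end
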